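/- Let the torus T² = Circle × Circle act on the unit sphere S⁵ = {(v,w,z) ∈ ℂ³ : |v|²+|w|²+|z|² = 1} by (s,t)·(v,w,z) = (stv, sw, tz). Then there is a homeomorphism Φ from the orbit space S⁵/T² to the unit sphere S³ = {(x,r,t) ∈ ℂ×ℝ×ℝ : |x|²+r²+t² = 1} such that for all u ∈ Circle and all (v,w,z) ∈ S⁵, writing Φ([v,w,z]) = (x,r,t), one has Φ([uv, w, z]) = (ux, r, t). -/

import Mathlib

/-
An orbit of `T²` on `S⁵` is determined by the moduli `a = |v|²`, `b = |w|²`, `c = |z|²` and the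
invariant `v w̄ z̄`. The invariants `n = (4 v w̄ z̄, b - 4ac, a - c)` satisfy
`|n₁|² + n₂² = (b + 4ac)²` and never vanish on `S⁵`; the homeomorphism is the radial projection of
`n` to `S³`, visibly equivariant for the rotation of `v`. If `n(q) = m n(p)` with `m > 0`, the
moduli satisfy `b' = m b`, `a'c' = m ac`, `a' - c' = m (a - c)`, so the sphere condition becomes
`m b + √(4m ac + m² (a - c)²) = 1`, whose left side is strictly increasing in `m`: thus `m = 1`
and the orbits agree. Solving the same equation by the intermediate value theorem gives
surjectivity, and a continuous bijection from the compact orbit space onto `S³` is a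
homeomorphism.
-/

/-- The unit sphere `S⁵ ⊂ ℂ³`. -/
abbrev SphereC3 : Type := {p : ℂ × ℂ × ℂ // ‖p.1‖ ^ 2 + ‖p.2.1‖ ^ 2 + ‖p.2.2‖ ^ 2 = 1}

/-- The unit sphere `S³ ⊂ ℂ × ℝ × ℝ`. -/
abbrev SphereCRR : Type := {q : ℂ × ℝ × ℝ // ‖q.1‖ ^ 2 + q.2.1 ^ 2 + q.2.2 ^ 2 = 1}

/-- The defining `T² = Circle × Circle`-action `(s, t) · (v, w, z) = (s t v, s w, t z)`
on `S⁵`. -/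
def actT2 (st : Circle × Circle) (x : SphereC3) : SphereC3 :=
  ⟨((st.1 : ℂ) * (st.2 : ℂ) * x.val.1, (st.1 : ℂ) * x.val.2.1, (st.2 : ℂ) * x.val.2.2), by
    have h := x.property; simpa [Circle.norm_coe, mul_pow] using h⟩

/-- The auxiliary `Circle`-action `u · (v, w, z) = (u v, w, z)` on `S⁵`. -/
def actFirst (u : Circle) (x : SphereC3) : SphereC3 :=
  ⟨((u : ℂ) * x.val.1, x.val.2.1, x.val.2.2), by
    have h := x.property; simpa [Circle.norm_coe] using h⟩

/-- The orbit relation of the `T²`-action on `S⁵`. -/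
def orbitRelS5T2 (x y : SphereC3) : Prop := ∃ st : Circle × Circle, actT2 st x = y

open ComplexConjugate

noncomputable section

lemma exists_homeomorph_quot {X Y : Type*} [TopologicalSpace X] [CompactSpace X]
    [TopologicalSpace Y] [T2Space Y] {r : X → X → Prop} {f : X → Y} (hf : Continuous f)
    (hsurj : Function.Surjective f) (hr : ∀ x y, r x y → f x = f y)
    (hfr : ∀ x y, f x = f y → r x y) :
    ∃ Φ : Quot r ≃ₜ Y, ∀ x, Φ (Quot.mk r x) = f x := by
  have hinj : Function.Injective (Quot.lift f hr) := by
    rintro ⟨x⟩ ⟨y⟩ h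
    exact Quot.sound (hfr x y h)
  have hbij : Function.Bijective (Quot.lift f hr) :=
    ⟨hinj, fun y => (hsurj y).elim fun x hx => ⟨Quot.mk r x, hx⟩⟩
  exact ⟨(continuous_quot_lift hr hf).homeoOfEquivCompactToT2 (f := Equiv.ofBijective _ hbij),
    fun _ => rfl⟩

lemma exists_circle_mul_eq {a a' : ℂ} (h : ‖a‖ = ‖a'‖) : ∃ u : Circle, (u : ℂ) * a = a' := by
  refine ⟨Circle.exp (Complex.arg a' - Complex.arg a), ?_⟩
  calc (Circle.exp (Complex.arg a' - Complex.arg a) : ℂ) * a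
      = Complex.exp ((Complex.arg a' - Complex.arg a) * Complex.I)
          * (‖a‖ * Complex.exp (Complex.arg a * Complex.I)) := by
        rw [Circle.coe_exp, Complex.norm_mul_exp_arg_mul_I]; push_cast; rfl
    _ = ‖a'‖ * Complex.exp (Complex.arg a' * Complex.I) := by
        rw [h, mul_left_comm, ← Complex.exp_add]; ring_nf
    _ = a' := Complex.norm_mul_exp_arg_mul_I a'

lemma circle_mul_conj (u : Circle) : (u : ℂ) * conj (u : ℂ) = 1 := by
  rw [Complex.mul_conj, Circle.normSq_coe, Complex.ofReal_one]

lemma exists_torus_mul_eq {v w z v' w' z' : ℂ} (hv : ‖v‖ = ‖v'‖) (hw : ‖w‖ = ‖w'‖)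
    (hz : ‖z‖ = ‖z'‖) (hζ : v * conj w * conj z = v' * conj w' * conj z') :
    ∃ s t : Circle, (s : ℂ) * t * v = v' ∧ (s : ℂ) * w = w' ∧ (t : ℂ) * z = z' := by
  by_cases hw0 : w = 0
  · obtain ⟨t, ht⟩ := exists_circle_mul_eq hz
    obtain ⟨s, hs⟩ := exists_circle_mul_eq (a := t * v) (a' := v') (by simpa [Circle.norm_coe])
    have hw0' : w' = 0 := by simpa [hw0] using hw.symm
    exact ⟨s, t, by rw [← hs, mul_assoc], by rw [hw0, hw0', mul_zero], ht⟩
  by_cases hz0 : z = 0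
  · obtain ⟨s, hs⟩ := exists_circle_mul_eq hw
    obtain ⟨t, ht⟩ := exists_circle_mul_eq (a := s * v) (a' := v') (by simpa [Circle.norm_coe])
    have hz0' : z' = 0 := by simpa [hz0] using hz.symm
    exact ⟨s, t, by rw [← ht, mul_left_comm, mul_assoc], hs, by rw [hz0, hz0', mul_zero]⟩
  obtain ⟨s, rfl⟩ := exists_circle_mul_eq hw
  obtain ⟨t, rfl⟩ := exists_circle_mul_eq hz
  refine ⟨s, t, ?_, rfl, rfl⟩
  have hwz : conj w * conj z ≠ 0 := by simp [hw0, hz0]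
  have hv' : v = v' * conj (s : ℂ) * conj (t : ℂ) := by
    apply mul_right_cancel₀ hwz
    simp only [map_mul] at hζ
    linear_combination hζ
  rw [hv']
  linear_combination v' * (conj (t : ℂ) * t * circle_mul_conj s + circle_mul_conj t)

def sqNorm (q : ℂ × ℝ × ℝ) : ℝ := ‖q.1‖ ^ 2 + q.2.1 ^ 2 + q.2.2 ^ 2

lemma sqNorm_nonneg (q : ℂ × ℝ × ℝ) : 0 ≤ sqNorm q := by
  unfold sqNorm; positivity

lemma sqNorm_smul (l : ℝ) (q : ℂ × ℝ × ℝ) : sqNorm (l • q) = l ^ 2 * sqNorm q := by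
  simp only [sqNorm, Prod.smul_fst, Prod.smul_snd, smul_eq_mul, norm_smul, Real.norm_eq_abs,
    mul_pow, sq_abs]
  ring

def projSphere (q : ℂ × ℝ × ℝ) : ℂ × ℝ × ℝ := (√(sqNorm q))⁻¹ • q

lemma sqNorm_projSphere {q : ℂ × ℝ × ℝ} (hq : sqNorm q ≠ 0) : sqNorm (projSphere q) = 1 := by
  rw [projSphere, sqNorm_smul, inv_pow, Real.sq_sqrt (sqNorm_nonneg q), inv_mul_cancel₀ hq]

lemma projSphere_smul {l : ℝ} (hl : 0 < l) (q : ℂ × ℝ × ℝ) : projSphere (l • q) = projSphere q := by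
  rw [projSphere, projSphere, sqNorm_smul, Real.sqrt_mul (sq_nonneg l), Real.sqrt_sq hl.le,
    smul_smul, mul_inv, mul_comm l⁻¹, mul_assoc, inv_mul_cancel₀ hl.ne', mul_one]

lemma projSphere_of_sqNorm_eq_one {q : ℂ × ℝ × ℝ} (hq : sqNorm q = 1) : projSphere q = q := by
  rw [projSphere, hq, Real.sqrt_one, inv_one, one_smul]

lemma exists_pos_smul_of_projSphere_eq {p q : ℂ × ℝ × ℝ} (hp : sqNorm p ≠ 0) (hq : sqNorm q ≠ 0)
    (h : projSphere p = projSphere q) : ∃ m : ℝ, 0 < m ∧ q = m • p := by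
  have hp' : 0 < √(sqNorm p) := Real.sqrt_pos.2 ((sqNorm_nonneg p).lt_of_ne' hp)
  have hq' : 0 < √(sqNorm q) := Real.sqrt_pos.2 ((sqNorm_nonneg q).lt_of_ne' hq)
  refine ⟨√(sqNorm q) / √(sqNorm p), div_pos hq' hp', ?_⟩
  have := congrArg (√(sqNorm q) • ·) h
  simp only [projSphere, smul_smul] at this
  rw [mul_inv_cancel₀ hq'.ne', one_smul] at this
  rw [div_eq_mul_inv, this]

lemma projSphere_mul_fst (u : ℂ) (hu : ‖u‖ = 1) (q : ℂ × ℝ × ℝ) :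
    projSphere (u * q.1, q.2) = (u * (projSphere q).1, (projSphere q).2) := by
  have : sqNorm (u * q.1, q.2) = sqNorm q := by simp [sqNorm, hu]
  simp only [projSphere, this, Prod.smul_mk, Prod.smul_fst, Prod.smul_snd, mul_smul_comm]

def invariants (p : ℂ × ℂ × ℂ) : ℂ × ℝ × ℝ :=
  (4 * p.1 * conj p.2.1 * conj p.2.2, ‖p.2.1‖ ^ 2 - 4 * ‖p.1‖ ^ 2 * ‖p.2.2‖ ^ 2,
    ‖p.1‖ ^ 2 - ‖p.2.2‖ ^ 2)

lemma continuous_invariants : Continuous invariants := by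
  unfold invariants; fun_prop

lemma sq_norm_invariants_fst (p : ℂ × ℂ × ℂ) :
    ‖(invariants p).1‖ ^ 2 = 16 * ‖p.1‖ ^ 2 * ‖p.2.1‖ ^ 2 * ‖p.2.2‖ ^ 2 := by
  simp only [invariants, norm_mul, Complex.norm_conj, mul_pow]
  norm_num

lemma sq_norm_invariants_fst_add_sq (p : ℂ × ℂ × ℂ) :
    ‖(invariants p).1‖ ^ 2 + (invariants p).2.1 ^ 2
      = (‖p.2.1‖ ^ 2 + 4 * ‖p.1‖ ^ 2 * ‖p.2.2‖ ^ 2) ^ 2 := by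
  rw [sq_norm_invariants_fst]; simp only [invariants]; ring

lemma sqNorm_invariants_pos {p : ℂ × ℂ × ℂ} (hp : ‖p.1‖ ^ 2 + ‖p.2.1‖ ^ 2 + ‖p.2.2‖ ^ 2 = 1) :
    0 < sqNorm (invariants p) := by
  have h : sqNorm (invariants p)
      = (‖p.2.1‖ ^ 2 + 4 * ‖p.1‖ ^ 2 * ‖p.2.2‖ ^ 2) ^ 2 + (‖p.1‖ ^ 2 - ‖p.2.2‖ ^ 2) ^ 2 := by
    rw [sqNorm, sq_norm_invariants_fst_add_sq]; rfl
  rw [h]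
  have : 0 < ‖p.2.1‖ ^ 2 + 4 * ‖p.1‖ ^ 2 * ‖p.2.2‖ ^ 2 ∨ ‖p.1‖ ^ 2 ≠ ‖p.2.2‖ ^ 2 := by
    by_contra! h0
    nlinarith [sq_nonneg ‖p.1‖, sq_nonneg ‖p.2.1‖, sq_nonneg ‖p.2.2‖]
  rcases this with h1 | h1
  · positivity
  · have := sub_ne_zero.2 h1; positivity

def scaleFun (β γ δ m : ℝ) : ℝ := m * β + √(m * γ + m ^ 2 * δ ^ 2)

section scaleFun

variable {β γ δ : ℝ}

lemma continuous_scaleFun : Continuous (scaleFun β γ δ) := by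
  unfold scaleFun; fun_prop

lemma strictMonoOn_scaleFun (hβ : 0 ≤ β) (hγ : 0 ≤ γ) (h : 0 < β + γ + δ ^ 2) :
    StrictMonoOn (scaleFun β γ δ) (Set.Ici 0) := by
  intro m (hm : 0 ≤ m) m' _ hmm'
  have hinner : m * γ + m ^ 2 * δ ^ 2 ≤ m' * γ + m' ^ 2 * δ ^ 2 := by gcongr
  rcases hβ.lt_or_eq with hβ | rfl
  · have := Real.sqrt_le_sqrt hinner
    have := mul_lt_mul_of_pos_right hmm' hβ
    simp only [scaleFun]; linarith
  · have hinner' : m * γ + m ^ 2 * δ ^ 2 < m' * γ + m' ^ 2 * δ ^ 2 := by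
      rcases hγ.lt_or_eq with hγ | rfl
      · nlinarith [sq_nonneg δ, mul_le_mul_of_nonneg_right (pow_le_pow_left₀ hm hmm'.le 2)
          (sq_nonneg δ)]
      · have : 0 < δ ^ 2 := by linarith
        have := pow_lt_pow_left₀ hmm' hm two_ne_zero
        nlinarith
    simp only [scaleFun, mul_zero, zero_add]
    exact Real.sqrt_lt_sqrt (by positivity) hinner'

lemma exists_scaleFun_eq_one (hβ : 0 ≤ β) (hγ : 0 ≤ γ) (h : 0 < β + γ + δ ^ 2) :
    ∃ m, 0 < m ∧ scaleFun β γ δ m = 1 := by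
  set κ := β ^ 2 + γ + δ ^ 2
  have hκ : 0 < κ := by
    rcases hβ.lt_or_eq with hβ | rfl <;> simp only [κ] <;> nlinarith
  set M := max 1 κ⁻¹
  have hM1 : 1 ≤ M := le_max_left _ _
  have hMκ : 1 ≤ M * κ := by
    calc 1 = κ⁻¹ * κ := (inv_mul_cancel₀ hκ.ne').symm
      _ ≤ M * κ := by gcongr; exact le_max_right _ _
  -- `(x + √y)² ≥ x² + y` and `M² ≥ M` give `scaleFun M ^ 2 ≥ M κ ≥ 1`
  have hge : 1 ≤ scaleFun β γ δ M := by
    have hy : 0 ≤ M * γ + M ^ 2 * δ ^ 2 := by positivity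
    have hsq := Real.sq_sqrt hy
    have hs := Real.sqrt_nonneg (M * γ + M ^ 2 * δ ^ 2)
    simp only [scaleFun]
    nlinarith [mul_nonneg (mul_nonneg (by linarith : (0:ℝ) ≤ M) (by linarith : (0:ℝ) ≤ M - 1))
      (add_nonneg (sq_nonneg β) (sq_nonneg δ)), mul_nonneg (by linarith : (0:ℝ) ≤ M) hβ]
  obtain ⟨m, hm, hm1⟩ := intermediate_value_Icc (by linarith : (0:ℝ) ≤ M)
    continuous_scaleFun.continuousOn ⟨by simp [scaleFun], hge⟩
  refine ⟨m, hm.1.lt_of_ne ?_, hm1⟩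
  rintro rfl
  simp [scaleFun] at hm1

end scaleFun

lemma invariants_actT2 (st : Circle × Circle) (x : SphereC3) :
    invariants (actT2 st x).1 = invariants x.1 := by
  obtain ⟨s, t⟩ := st
  have hs := circle_mul_conj s
  have ht := circle_mul_conj t
  simp only [invariants, actT2, map_mul, norm_mul, Circle.norm_coe, one_mul, Prod.mk.injEq,
    and_true]
  linear_combination 4 * x.1.1 * conj x.1.2.1 * conj x.1.2.2 * (conj (t : ℂ) * t * hs + ht)

lemma invariants_actFirst (u : Circle) (x : SphereC3) :
    invariants (actFirst u x).1 = ((u : ℂ) * (invariants x.1).1, (invariants x.1).2) := by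
  simp only [invariants, actFirst, norm_mul, Circle.norm_coe, one_mul, Prod.mk.injEq, and_true]
  ring

lemma moduli_of_invariants_eq_smul {p q : ℂ × ℂ × ℂ} {m : ℝ} (hm : 0 ≤ m)
    (h : invariants q = m • invariants p) :
    ‖q.2.1‖ ^ 2 = m * ‖p.2.1‖ ^ 2 ∧
      ‖q.1‖ ^ 2 * ‖q.2.2‖ ^ 2 = m * (‖p.1‖ ^ 2 * ‖p.2.2‖ ^ 2) ∧
      ‖q.1‖ ^ 2 - ‖q.2.2‖ ^ 2 = m * (‖p.1‖ ^ 2 - ‖p.2.2‖ ^ 2) := by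
  have h1 : (invariants q).1 = m • (invariants p).1 := congrArg Prod.fst h
  have h2 : (invariants q).2.1 = m * (invariants p).2.1 := congrArg (·.2.1) h
  have h3 : (invariants q).2.2 = m * (invariants p).2.2 := congrArg (·.2.2) h
  have hsum : ‖q.2.1‖ ^ 2 + 4 * ‖q.1‖ ^ 2 * ‖q.2.2‖ ^ 2
      = m * (‖p.2.1‖ ^ 2 + 4 * ‖p.1‖ ^ 2 * ‖p.2.2‖ ^ 2) := by
    refine (sq_eq_sq₀ (by positivity) (by positivity)).1 ?_
    rw [← sq_norm_invariants_fst_add_sq, h1, h2, norm_smul, Real.norm_of_nonneg hm, mul_pow,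
      mul_pow, mul_pow, ← mul_add, sq_norm_invariants_fst_add_sq]
  simp only [invariants] at h2 h3
  refine ⟨by linarith, by linarith, h3⟩

lemma sqrt_four_mul_add_sq_sub {a c : ℝ} (ha : 0 ≤ a) (hc : 0 ≤ c) :
    √(4 * a * c + (a - c) ^ 2) = a + c := by
  rw [show 4 * a * c + (a - c) ^ 2 = (a + c) ^ 2 by ring, Real.sqrt_sq (by positivity)]

lemma eq_one_of_invariants_eq_smul {p q : ℂ × ℂ × ℂ}
    (hp : ‖p.1‖ ^ 2 + ‖p.2.1‖ ^ 2 + ‖p.2.2‖ ^ 2 = 1)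
    (hq : ‖q.1‖ ^ 2 + ‖q.2.1‖ ^ 2 + ‖q.2.2‖ ^ 2 = 1)
    {m : ℝ} (hm : 0 < m) (h : invariants q = m • invariants p) : m = 1 := by
  obtain ⟨hb, hac, hd⟩ := moduli_of_invariants_eq_smul hm.le h
  set a := ‖p.1‖ ^ 2
  set b := ‖p.2.1‖ ^ 2
  set c := ‖p.2.2‖ ^ 2
  have hpos : 0 < b + 4 * a * c + (a - c) ^ 2 := by
    by_contra! h0
    nlinarith [sq_nonneg ‖p.1‖, sq_nonneg ‖p.2.1‖, sq_nonneg ‖p.2.2‖, sq_nonneg (a - c)]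
  have h1 : scaleFun b (4 * a * c) (a - c) 1 = 1 := by
    rw [scaleFun, one_mul, one_mul, one_pow, one_mul, sqrt_four_mul_add_sq_sub (by positivity)
      (by positivity)]
    linarith
  have hm1 : scaleFun b (4 * a * c) (a - c) m = 1 := by
    have hq' : m * (4 * a * c) + m ^ 2 * (a - c) ^ 2
        = 4 * ‖q.1‖ ^ 2 * ‖q.2.2‖ ^ 2 + (‖q.1‖ ^ 2 - ‖q.2.2‖ ^ 2) ^ 2 := by
      rw [hd]; linear_combination -4 * hac
    rw [scaleFun, ← hb, hq', sqrt_four_mul_add_sq_sub (by positivity) (by positivity)]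
    linarith
  exact (strictMonoOn_scaleFun (by positivity) (by positivity) hpos).injOn hm.le
    (Set.mem_Ici.2 zero_le_one) (hm1.trans h1.symm)

lemma orbitRelS5T2_of_invariants_eq {x y : SphereC3} (h : invariants y.1 = invariants x.1) :
    orbitRelS5T2 x y := by
  obtain ⟨⟨v, w, z⟩, hx⟩ := x
  obtain ⟨⟨v', w', z'⟩, hy⟩ := y
  obtain ⟨hb, hac, hd⟩ := moduli_of_invariants_eq_smul zero_le_one (h.trans (one_smul ℝ _).symm)
  simp only [one_mul] at hb hac hd
  have hnorm {r r' : ℂ} (hr : ‖r'‖ ^ 2 = ‖r‖ ^ 2) : ‖r‖ = ‖r'‖ :=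
    ((sq_eq_sq₀ (norm_nonneg _) (norm_nonneg _)).1 hr).symm
  have hζ : v * conj w * conj z = v' * conj w' * conj z' := by
    have := congrArg Prod.fst h
    simp only [invariants] at this
    linear_combination -this / 4
  obtain ⟨s, t, hv, hw, hz⟩ := exists_torus_mul_eq (hnorm (r := v) (by linarith))
    (hnorm hb) (hnorm (by linarith)) hζ
  exact ⟨(s, t), Subtype.ext (by simp only [actT2, hv, hw, hz])⟩

lemma exists_invariants_eq {a b c : ℝ} (ha : 0 ≤ a) (hb : 0 ≤ b) (hc : 0 ≤ c)
    (hsum : a + b + c = 1) {ζ : ℂ} (hζ : ‖ζ‖ ^ 2 = 16 * a * b * c) :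
    ∃ x : SphereC3, invariants x.1 = (ζ, b - 4 * a * c, a - c) := by
  have hnorm {r : ℝ} (hr : 0 ≤ r) : ‖((√r : ℝ) : ℂ)‖ ^ 2 = r := by
    rw [Complex.norm_real, Real.norm_of_nonneg (Real.sqrt_nonneg r), Real.sq_sqrt hr]
  have hv : ‖(√a : ℂ) * Complex.exp (Complex.arg ζ * Complex.I)‖ ^ 2 = a := by
    rw [norm_mul, Complex.norm_exp_ofReal_mul_I, mul_one, hnorm ha]
  have h4 : 4 * √a * √b * √c = ‖ζ‖ := by
    refine (sq_eq_sq₀ (by positivity) (norm_nonneg ζ)).1 ?_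
    rw [hζ, mul_pow, mul_pow, mul_pow, Real.sq_sqrt ha, Real.sq_sqrt hb, Real.sq_sqrt hc]
    ring
  refine ⟨⟨(√a * Complex.exp (Complex.arg ζ * Complex.I), √b, √c), ?_⟩, ?_⟩
  · simp only [hv, hnorm hb, hnorm hc, hsum]
  · simp only [invariants, hv, hnorm hb, hnorm hc, Complex.conj_ofReal]
    congr 1
    conv_rhs => rw [← Complex.norm_mul_exp_arg_mul_I ζ, ← h4]
    push_cast
    ring

def orbitMap (x : SphereC3) : SphereCRR :=
  ⟨projSphere (invariants x.1), sqNorm_projSphere (sqNorm_invariants_pos x.2).ne'⟩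

lemma continuous_orbitMap : Continuous orbitMap := by
  have hI : Continuous fun x : SphereC3 => invariants x.1 :=
    continuous_invariants.comp continuous_subtype_val
  have hS : Continuous fun x : SphereC3 => √(sqNorm (invariants x.1)) := by
    unfold sqNorm; fun_prop
  exact ((hS.inv₀ fun x => (Real.sqrt_pos.2 (sqNorm_invariants_pos x.2)).ne').smul hI).subtype_mk _

lemma orbitMap_actT2 (st : Circle × Circle) (x : SphereC3) : orbitMap (actT2 st x) = orbitMap x :=
  Subtype.ext (by simp only [orbitMap, invariants_actT2])

lemma orbitMap_actFirst (u : Circle) (x : SphereC3) :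
    (orbitMap (actFirst u x)).1 =
      ((u : ℂ) * (orbitMap x).1.1, (orbitMap x).1.2.1, (orbitMap x).1.2.2) := by
  simp only [orbitMap, invariants_actFirst, projSphere_mul_fst _ (Circle.norm_coe u)]

lemma orbitRelS5T2_of_orbitMap_eq {x y : SphereC3} (h : orbitMap x = orbitMap y) :
    orbitRelS5T2 x y := by
  obtain ⟨m, hm, hxy⟩ := exists_pos_smul_of_projSphere_eq (sqNorm_invariants_pos x.2).ne'
    (sqNorm_invariants_pos y.2).ne' (congrArg Subtype.val h)
  rw [eq_one_of_invariants_eq_smul x.2 y.2 hm hxy, one_smul] at hxy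
  exact orbitRelS5T2_of_invariants_eq hxy

lemma orbitMap_surjective : Function.Surjective orbitMap := by
  rintro ⟨⟨X, R, T⟩, hy⟩
  change ‖X‖ ^ 2 + R ^ 2 + T ^ 2 = 1 at hy
  set A := √(‖X‖ ^ 2 + R ^ 2)
  have hA : A ^ 2 = ‖X‖ ^ 2 + R ^ 2 := Real.sq_sqrt (by positivity)
  have hRA : |R| ≤ A := Real.abs_le_sqrt (by nlinarith [sq_nonneg ‖X‖])
  obtain ⟨hRA₁, hRA₂⟩ := abs_le.1 hRA
  obtain ⟨l, hl, hl1⟩ := exists_scaleFun_eq_one (β := (A + R) / 2) (γ := (A - R) / 2) (δ := T)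
    (by linarith) (by linarith) (by nlinarith [Real.sqrt_nonneg (‖X‖ ^ 2 + R ^ 2), sq_nonneg T])
  set S := √(l * ((A - R) / 2) + l ^ 2 * T ^ 2)
  have hS : S ^ 2 = l * ((A - R) / 2) + l ^ 2 * T ^ 2 := Real.sq_sqrt (by nlinarith)
  have hlT : |l * T| ≤ S := Real.abs_le_sqrt (by nlinarith)
  obtain ⟨hlT₁, hlT₂⟩ := abs_le.1 hlT
  -- the moduli `(a, b, c) = ((S + lT)/2, l(A + R)/2, (S - lT)/2)` have `a + b + c = 1` and
  -- `4ac = l(A - R)/2`, so that `16abc = l²‖X‖²`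
  obtain ⟨x, hx⟩ := exists_invariants_eq (a := (S + l * T) / 2) (b := l * ((A + R) / 2))
    (c := (S - l * T) / 2) (ζ := l * X) (by linarith) (by nlinarith) (by linarith)
    (by rw [← hl1, scaleFun]; ring)
    (by rw [norm_mul, Complex.norm_real, Real.norm_of_nonneg hl.le]
        linear_combination -2 * l * (A + R) * hS - l ^ 2 * hA)
  refine ⟨x, Subtype.ext ?_⟩
  change projSphere (invariants x.1) = (X, R, T)
  rw [hx, show ((l : ℂ) * X, l * ((A + R) / 2) - 4 * ((S + l * T) / 2) * ((S - l * T) / 2),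
      (S + l * T) / 2 - (S - l * T) / 2) = l • (X, R, T) by
    simp only [Prod.smul_mk, Complex.real_smul, smul_eq_mul, Prod.mk.injEq, true_and]
    exact ⟨by linear_combination -hS, by ring⟩,
    projSphere_smul hl, projSphere_of_sqNorm_eq_one (q := (X, R, T)) hy]

instance : CompactSpace SphereC3 := by
  refine isCompact_iff_compactSpace.1 <| (isCompact_closedBall (0 : ℂ × ℂ × ℂ) 1).of_isClosed_subset
    (isClosed_eq (by fun_prop) continuous_const) fun p (hp : _ = _) => ?_
  have h1 (r : ℂ) (hr : ‖r‖ ^ 2 ≤ 1) : ‖r‖ ≤ 1 :=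
    (pow_le_one_iff_of_nonneg (norm_nonneg r) two_ne_zero).1 hr
  simp only [Metric.mem_closedBall, dist_zero_right, Prod.norm_def]
  exact max_le (h1 _ (by nlinarith [sq_nonneg ‖p.2.1‖, sq_nonneg ‖p.2.2‖]))
    (max_le (h1 _ (by nlinarith [sq_nonneg ‖p.1‖, sq_nonneg ‖p.2.2‖]))
      (h1 _ (by nlinarith [sq_nonneg ‖p.1‖, sq_nonneg ‖p.2.1‖])))

end

/-- The orbit space `S⁵ / T²` is homeomorphic to `S³ ⊂ ℂ × ℝ × ℝ`, in a way such that the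
induced action `u · (v, w, z) = (u v, w, z)` corresponds to `u · (x, r, t) = (u x, r, t)`. -/
theorem orbit_space_S5_T2_homeo_S3 :
    ∃ Φ : Quot orbitRelS5T2 ≃ₜ SphereCRR,
      ∀ (u : Circle) (x : SphereC3),
        (Φ (Quot.mk orbitRelS5T2 (actFirst u x))).val =
          ((u : ℂ) * (Φ (Quot.mk orbitRelS5T2 x)).val.1,
            (Φ (Quot.mk orbitRelS5T2 x)).val.2.1,
            (Φ (Quot.mk orbitRelS5T2 x)).val.2.2) := by
  obtain ⟨Φ, hΦ⟩ := exists_homeomorph_quot continuous_orbitMap orbitMap_surjective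
    (fun x _ ⟨st, hst⟩ => hst ▸ (orbitMap_actT2 st x).symm)
    (fun _ _ => orbitRelS5T2_of_orbitMap_eq)
  exact ⟨Φ, fun u x => by rw [hΦ, hΦ]; exact orbitMap_actFirst u x⟩
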